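/- For any binary tree T, f(T) = ∑_{k≥1} (−1)^{k−1} f_k(T), where f_k(T) is the number of green chains of length k in T starting at the root, and f(T) equals 1 − F(T_R) if T is nonempty with T_L empty, 1 − F(T_L) if T is nonempty with T_R empty, and 0 otherwise (F being the number of maximal green nodes). -/

import Mathlib

open MeasureTheory

inductive BTree : Type
  | nil : BTree
  | node : BTree → BTree → BTree
deriving DecidableEq

namespace BTree

instance : MeasurableSpace BTree := ⊤

def size : BTree → ℕ
  | nil => 0
  | node l r => size l + size r + 1

def left : BTree → BTree
  | nil => nil
  | node l _ => l

def right : BTree → BTree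
  | nil => nil
  | node _ r => r

/-- The number of maximal green nodes (green = outdegree ≤ 1, maximal = no green
strict ancestor): a green root gives the unique maximal green node. -/
def F : BTree → ℕ
  | nil => 0
  | node l r => if l = nil ∨ r = nil then 1 else F l + F r

/-- The toll function `f(T) = F(T) - F(T_L) - F(T_R)`. -/
def f : BTree → ℤ
  | nil => 0
  | node nil r => 1 - F r
  | node l nil => 1 - F l
  | node _ _ => 0

/-- The list of all subtrees `T_v` rooted at nodes `v` of `T`. -/
def subtrees : BTree → List BTree
  | nil => []
  | node l r => node l r :: (subtrees l ++ subtrees r)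

/-- The root is green: the tree is nonempty and has at most one root child. -/
def greenRoot : BTree → Prop
  | nil => False
  | node l r => l = nil ∨ r = nil

instance : DecidablePred greenRoot := fun t => by
  cases t <;> simp [greenRoot] <;> infer_instance

/-- The random binary search tree with `n` nodes. -/
noncomputable def bst : ℕ → PMF BTree
  | 0 => PMF.pure nil
  | n + 1 =>
    (PMF.uniformOfFintype (Fin (n + 1))).bind fun i =>
      (bst i.val).bind fun l => (bst (n - i.val)).bind fun r => PMF.pure (node l r)
  decreasing_by
    · exact i.isLt
    · omega

/-- `fchain k T` is the number of green chains of length `k` in `T` starting at the root. -/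
def fchain : ℕ → BTree → ℕ
  | 0, _ => 0
  | 1, nil => 0
  | 1, node l r => if l = nil ∨ r = nil then 1 else 0
  | _ + 2, nil => 0
  | k + 2, node l r =>
    if l = nil ∨ r = nil then
      ((subtrees l).map (fun t => fchain (k + 1) t)).sum
        + ((subtrees r).map (fun t => fchain (k + 1) t)).sum
    else 0
  termination_by k _ => k

/-- `Fchain k T` is the total number of green chains of length `k` in `T`. -/
def Fchain (k : ℕ) (T : BTree) : ℕ := ((subtrees T).map (fchain k)).sum

end BTree

/-! Summing `f(t) = F(t) - F(t_L) - F(t_R)` over all subtrees `t` of `T` telescopes to `F(T)`.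
If the root of `T` is green, a green chain from the root is either the root alone or the root
followed by a green chain starting anywhere in `T_L` or `T_R`; so the alternating sum for `T` is
`1` minus the alternating sums of all green chains of `T_L` and `T_R`, which by induction
(applied to every subtree) are `F(T_L)` and `F(T_R)`. If the root is not green, both sides
vanish. -/

theorem List.sum_map_finset_sum {α ι M : Type*} [AddCommMonoid M] (l : List α) (s : Finset ι)
    (g : α → ι → M) : (l.map fun a ↦ ∑ i ∈ s, g a i).sum = ∑ i ∈ s, (l.map fun a ↦ g a i).sum := by
  simpa using Multiset.sum_map_sum (m := (l : Multiset α)) (s := s) (f := g)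

namespace BTree

theorem size_le_of_mem_subtrees {T t : BTree} (h : t ∈ subtrees T) : size t ≤ size T := by
  induction T with
  | nil => simp [subtrees] at h
  | node l r ihl ihr =>
    simp only [subtrees, List.mem_cons, List.mem_append] at h
    rcases h with rfl | h | h
    · exact le_rfl
    · have := ihl h; simp only [size]; omega
    · have := ihr h; simp only [size]; omega

theorem f_node (l r : BTree) : f (node l r) = F (node l r) - F l - F r := by
  cases l <;> cases r <;> simp [f, F]

theorem sum_map_f_subtrees (T : BTree) : ((subtrees T).map f).sum = F T := by
  induction T with
  | nil => simp [subtrees, F]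
  | node l r ihl ihr =>
    simp only [subtrees, List.map_cons, List.map_append, List.sum_cons, List.sum_append, ihl, ihr,
      f_node]
    ring

theorem fchain_nil (k : ℕ) : fchain k nil = 0 := by
  match k with
  | 0 | 1 | _ + 2 => simp [fchain]

theorem fchain_node_of_not_green {l r : BTree} (h : ¬(l = nil ∨ r = nil)) (k : ℕ) :
    fchain k (node l r) = 0 := by
  match k with
  | 0 | 1 | _ + 2 => simp [fchain, h]

theorem fchain_one_node_of_green {l r : BTree} (h : l = nil ∨ r = nil) :
    fchain 1 (node l r) = 1 := by
  simp [fchain, h]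

theorem fchain_add_two_node_of_green {l r : BTree} (h : l = nil ∨ r = nil) (k : ℕ) :
    fchain (k + 2) (node l r) = Fchain (k + 1) l + Fchain (k + 1) r := by
  simp [fchain, Fchain, h]

theorem F_eq_alternating_sum_Fchain {T : BTree} {m : ℕ}
    (h : ∀ t ∈ subtrees T, f t = ∑ k ∈ Finset.range m, (-1 : ℤ) ^ k * fchain (k + 1) t) :
    F T = ∑ k ∈ Finset.range m, (-1 : ℤ) ^ k * Fchain (k + 1) T := by
  rw [← sum_map_f_subtrees, List.map_congr_left h, List.sum_map_finset_sum]
  refine Finset.sum_congr rfl fun k _ ↦ ?_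
  rw [List.sum_map_mul_left, Fchain, Nat.cast_list_sum, List.map_map]
  rfl

theorem f_eq_alternating_sum_range (T : BTree) (m : ℕ) (hm : size T ≤ m) :
    f T = ∑ k ∈ Finset.range m, (-1 : ℤ) ^ k * fchain (k + 1) T := by
  match T with
  | nil => simp [f, fchain_nil]
  | node l r =>
    by_cases hg : l = nil ∨ r = nil
    · obtain ⟨m, rfl⟩ : ∃ m', m = m' + 1 := ⟨m - 1, by simp only [size] at hm; omega⟩
      have hlr : size l + size r ≤ m := by simp only [size] at hm; omega
      have hl : (F l : ℤ) = ∑ k ∈ Finset.range m, (-1 : ℤ) ^ k * Fchain (k + 1) l :=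
        F_eq_alternating_sum_Fchain fun t ht ↦ f_eq_alternating_sum_range t m
          ((size_le_of_mem_subtrees ht).trans (by omega))
      have hr : (F r : ℤ) = ∑ k ∈ Finset.range m, (-1 : ℤ) ^ k * Fchain (k + 1) r :=
        F_eq_alternating_sum_Fchain fun t ht ↦ f_eq_alternating_sum_range t m
          ((size_le_of_mem_subtrees ht).trans (by omega))
      rw [f_node, Finset.sum_range_succ', fchain_one_node_of_green hg]
      simp only [fchain_add_two_node_of_green hg, F, if_pos hg, hl, hr]
      push_cast
      simp only [pow_succ, mul_add, mul_neg_one, neg_mul, Finset.sum_add_distrib,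
        Finset.sum_neg_distrib]
      ring
    · rw [f_node, F, if_neg hg]
      simp [fchain_node_of_not_green hg]
termination_by size T
decreasing_by
  all_goals
    have := size_le_of_mem_subtrees ht
    simp only [size]
    omega

end BTree

open BTree in
/-- `f(T) = ∑_{k≥1} (−1)^{k−1} f_k(T)`; the sum is finite since
`f_k(T) = 0` for `k > |T|`, so we sum up to any `m ≥ |T|`. -/
theorem f_eq_alternating_sum_fchain (T : BTree) (m : ℕ) (hm : size T ≤ m) :
    f T = ∑ k ∈ Finset.Icc 1 m, (-1 : ℤ) ^ (k - 1) * (fchain k T : ℤ) := by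
  rw [← Finset.Ico_add_one_right_eq_Icc, Finset.sum_Ico_eq_sum_range,
    f_eq_alternating_sum_range T m hm]
  simp [add_comm 1]
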